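/- For integers n₁, n₂, n₃ ≥ 1, set n = n₁+n₂+n₃+1. The characteristic polynomial of the distance matrix of G₂ = K₁∨(K_{n₁}∪K_{n₂}∪K_{n₃}) satisfies det(λI_n − D(G₂)) = (λ+1)^{n−4}·g(λ), where g(λ) = λ⁴ − (n₁+n₂+n₃−3)λ³ − 3(n₁n₂+n₁n₃+n₂n₃+n₁+n₂+n₃−1)λ² − [5(n₁n₂+n₁n₃+n₂n₃+n₁n₂n₃) + 3(n₁+n₂+n₃) − 1]λ − 3n₁n₂n₃ − 2(n₁n₂+n₁n₃+n₂n₃) − (n₁+n₂+n₃). -/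

import Mathlib

/-- The distance matrix of a graph `G`, with real entries: the `(u,v)` entry is the
distance between `u` and `v` in `G`. -/
noncomputable def distMatrix {V : Type*} [Fintype V] (G : SimpleGraph V) : Matrix V V ℝ :=
  Matrix.of fun u v => (G.dist u v : ℝ)

/-- The distance matrix is real symmetric (Hermitian). -/
theorem distMatrix_isHermitian {V : Type*} [Fintype V] (G : SimpleGraph V) :
    (distMatrix G).IsHermitian := by
  unfold Matrix.IsHermitian
  ext u v
  simp [distMatrix, Matrix.conjTranspose_apply, SimpleGraph.dist_comm]

/-- The multiset of eigenvalues of the distance matrix of `G` (with multiplicity). -/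
noncomputable def distEigMultiset {V : Type*} [Fintype V] [DecidableEq V]
    (G : SimpleGraph V) : Multiset ℝ :=
  Finset.univ.val.map (distMatrix_isHermitian G).eigenvalues

/-- `distEig G k` is `λ_k(G)`, the `k`-th distance eigenvalue of `G` (1-indexed),
where the distance eigenvalues are arranged in non-increasing order. -/
noncomputable def distEig {V : Type*} [Fintype V] [DecidableEq V]
    (G : SimpleGraph V) (k : ℕ) : ℝ :=
  (((distEigMultiset G).sort (· ≤ ·)).reverse).getD (k - 1) 0

/-- The disjoint union `G ∪ H` of two vertex-disjoint graphs. -/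
def graphSum {α β : Type*} (G : SimpleGraph α) (H : SimpleGraph β) : SimpleGraph (α ⊕ β) where
  Adj x y :=
    match x, y with
    | Sum.inl a, Sum.inl b => G.Adj a b
    | Sum.inr a, Sum.inr b => H.Adj a b
    | _, _ => False
  symm := by
    constructor
    rintro (a | a) (b | b) h
    · exact G.adj_symm h
    · exact h
    · exact h
    · exact H.adj_symm h
  loopless := by
    constructor
    rintro (a | a) h
    · exact G.irrefl h
    · exact H.irrefl h

/-- The join `G ∨ H` of two vertex-disjoint graphs: their disjoint union together with
all edges joining a vertex of `G` and a vertex of `H`. -/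
def graphJoin {α β : Type*} (G : SimpleGraph α) (H : SimpleGraph β) : SimpleGraph (α ⊕ β) where
  Adj x y :=
    match x, y with
    | Sum.inl a, Sum.inl b => G.Adj a b
    | Sum.inr a, Sum.inr b => H.Adj a b
    | Sum.inl _, Sum.inr _ => True
    | Sum.inr _, Sum.inl _ => True
  symm := by
    constructor
    rintro (a | a) (b | b) h
    · exact G.adj_symm h
    · trivial
    · trivial
    · exact H.adj_symm h
  loopless := by
    constructor
    rintro (a | a) h
    · exact G.irrefl h
    · exact H.irrefl h

/-- `K₁ ∨ (K_{n₁} ∪ K_{n₂})`. -/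
def joinCliques2 (n₁ n₂ : ℕ) : SimpleGraph (Fin 1 ⊕ (Fin n₁ ⊕ Fin n₂)) :=
  graphJoin ⊤ (graphSum ⊤ ⊤)

/-- `K₁ ∨ (K_{n₁} ∪ K_{n₂} ∪ K_{n₃})`. -/
def joinCliques3 (n₁ n₂ n₃ : ℕ) : SimpleGraph (Fin 1 ⊕ (Fin n₁ ⊕ (Fin n₂ ⊕ Fin n₃))) :=
  graphJoin ⊤ (graphSum ⊤ (graphSum ⊤ ⊤))

/-- `K₁ ∨ (K_{n₁} ∪ K_{n₂} ∪ K_{n₃} ∪ K_{n₄})`. -/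
def joinCliques4 (n₁ n₂ n₃ n₄ : ℕ) :
    SimpleGraph (Fin 1 ⊕ (Fin n₁ ⊕ (Fin n₂ ⊕ (Fin n₃ ⊕ Fin n₄)))) :=
  graphJoin ⊤ (graphSum ⊤ (graphSum ⊤ (graphSum ⊤ ⊤)))

/-!
Every vertex of `K₁ ∨ (K_{n₁} ∪ K_{n₂} ∪ K_{n₃})` is adjacent to the apex, so all distances
are `0`, `1` or `2` and depend only on the blocks of the two endpoints: `D = U P Uᵀ - I`, where
`U` is the `n × 4` block-indicator matrix and `P` the `4 × 4` matrix of block distances.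
Hence `det(λI - D)` is the characteristic polynomial of `U P Uᵀ` at `λ + 1`, and exchanging the
factors (`charpoly (A * B) = X ^ (n - 4) * charpoly (B * A)`) reduces it to the `4 × 4` matrix
`P Uᵀ U = P · diag(1, n₁, n₂, n₃)`, whose characteristic polynomial at `λ + 1` is `g(λ)`.
-/

open Matrix Polynomial

theorem SimpleGraph.dist_eq_of_forall_adj {V : Type*} (G : SimpleGraph V) [DecidableRel G.Adj]
    [DecidableEq V] (c : V) (hc : ∀ v, v ≠ c → G.Adj c v) (u v : V) :
    G.dist u v = if u = v then 0 else if G.Adj u v then 1 else 2 := by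
  split_ifs with huv hadj
  · simp [huv]
  · exact G.dist_eq_one_iff_adj.mpr hadj
  · have hu : u ≠ c := fun h => hadj (h ▸ hc v (fun hv => huv (h.trans hv.symm)))
    have hv : v ≠ c := fun h => hadj (h ▸ (hc u hu).symm)
    have hcommon : (G.commonNeighbors u v).Nonempty :=
      ⟨c, G.mem_commonNeighbors.mpr ⟨(hc u hu).symm, (hc v hv).symm⟩⟩
    rw [SimpleGraph.dist, G.edist_eq_two_iff.mpr ⟨huv, hadj, hcommon⟩]
    rfl

namespace Matrix

variable {ι κ : Type*} (R : Type*) [DecidableEq κ] [CommRing R]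

def blockIndicator (f : ι → κ) : Matrix ι κ R :=
  of fun i k => if f i = k then 1 else 0

variable {R}

theorem blockIndicator_mul_mul_transpose [Fintype κ] (f : ι → κ) (P : Matrix κ κ R) :
    blockIndicator R f * P * (blockIndicator R f)ᵀ = P.submatrix f f := by
  ext i j
  simp [blockIndicator, mul_apply]

theorem transpose_blockIndicator_mul_self [Fintype ι] (f : ι → κ) :
    (blockIndicator R f)ᵀ * blockIndicator R f =
      diagonal fun k => ((Finset.univ.filter fun i => f i = k).card : R) := by
  ext k l
  by_cases hkl : k = l
  · subst hkl
    simp +contextual [blockIndicator, mul_apply, Finset.sum_boole]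
  · simp +contextual [blockIndicator, mul_apply, Ne.symm hkl, diagonal_apply_ne _ hkl]

theorem charpoly_submatrix_of_card_le [Fintype ι] [DecidableEq ι] [Fintype κ] (f : ι → κ)
    (P : Matrix κ κ R) (hle : Fintype.card κ ≤ Fintype.card ι) :
    (P.submatrix f f).charpoly = X ^ (Fintype.card ι - Fintype.card κ) *
      (P * diagonal fun k => ((Finset.univ.filter fun i => f i = k).card : R)).charpoly := by
  rw [← blockIndicator_mul_mul_transpose, ← transpose_blockIndicator_mul_self,
    Matrix.mul_assoc, charpoly_mul_comm_of_le _ _ hle, Matrix.mul_assoc]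

end Matrix

section JoinCliques3

variable {n₁ n₂ n₃ : ℕ}

def cliqueBlock : Fin 1 ⊕ (Fin n₁ ⊕ (Fin n₂ ⊕ Fin n₃)) → Fin 4
  | Sum.inl _ => 0
  | Sum.inr (Sum.inl _) => 1
  | Sum.inr (Sum.inr (Sum.inl _)) => 2
  | Sum.inr (Sum.inr (Sum.inr _)) => 3

-- Entry `(k, l)` is the distance between distinct vertices of blocks `k` and `l`; block `0` is
-- the apex.
def joinCliques3Pattern : Matrix (Fin 4) (Fin 4) ℝ :=
  !![1, 1, 1, 1; 1, 1, 2, 2; 1, 2, 1, 2; 1, 2, 2, 1]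

theorem distMatrix_joinCliques3 :
    distMatrix (joinCliques3 n₁ n₂ n₃) =
      joinCliques3Pattern.submatrix cliqueBlock cliqueBlock - 1 := by
  classical
  ext u v
  rw [distMatrix, of_apply, (joinCliques3 n₁ n₂ n₃).dist_eq_of_forall_adj (Sum.inl 0) ?_]
  · rcases u with a | a | a | a <;> rcases v with b | b | b | b <;>
      simp [joinCliques3, graphJoin, graphSum, cliqueBlock, joinCliques3Pattern, one_apply] <;>
      split_ifs <;> norm_num
  · rintro (a | v) h
    · exact absurd (congrArg Sum.inl (Subsingleton.elim a 0)) h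
    · trivial

theorem card_cliqueBlock_fiber :
    (fun k => ((Finset.univ.filter fun v : Fin 1 ⊕ (Fin n₁ ⊕ (Fin n₂ ⊕ Fin n₃)) =>
      cliqueBlock v = k).card : ℝ)) = ![1, (n₁ : ℝ), n₂, n₃] := by
  funext k
  rw [Finset.card_filter]
  fin_cases k <;> simp [Fintype.sum_sum_type, cliqueBlock]

theorem eval_charpoly_joinCliques3Pattern_mul_diagonal (a b c t : ℝ) :
    (joinCliques3Pattern * diagonal ![1, a, b, c]).charpoly.eval (t + 1) =
      t ^ 4 - (a + b + c - 3) * t ^ 3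
        - 3 * (a * b + a * c + b * c + a + b + c - 1) * t ^ 2
        - (5 * (a * b + a * c + b * c + a * b * c) + 3 * (a + b + c) - 1) * t
        - 3 * a * b * c - 2 * (a * b + a * c + b * c) - (a + b + c) := by
  have hprod : joinCliques3Pattern * diagonal ![1, a, b, c] =
      !![1, a, b, c; 1, a, 2 * b, 2 * c; 1, 2 * a, b, 2 * c; 1, 2 * a, 2 * b, c] := by
    ext i j
    fin_cases i <;> fin_cases j <;> simp [joinCliques3Pattern, mul_comm]
  rw [hprod, eval_charpoly, det_succ_row_zero]
  simp [Fin.sum_univ_succ, det_fin_three, submatrix, Fin.succAbove]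
  ring

end JoinCliques3

theorem charpoly_joinCliques3 (n₁ n₂ n₃ : ℕ) (h₁ : 1 ≤ n₁) (h₂ : 1 ≤ n₂) (h₃ : 1 ≤ n₃)
    (lam : ℝ) :
    (lam • (1 : Matrix (Fin 1 ⊕ (Fin n₁ ⊕ (Fin n₂ ⊕ Fin n₃)))
          (Fin 1 ⊕ (Fin n₁ ⊕ (Fin n₂ ⊕ Fin n₃))) ℝ)
        - distMatrix (joinCliques3 n₁ n₂ n₃)).det =
      (lam + 1) ^ (n₁ + n₂ + n₃ + 1 - 4) *
        (lam ^ 4 - ((n₁ : ℝ) + n₂ + n₃ - 3) * lam ^ 3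
          - 3 * ((n₁ : ℝ) * n₂ + n₁ * n₃ + n₂ * n₃ + n₁ + n₂ + n₃ - 1) * lam ^ 2
          - (5 * ((n₁ : ℝ) * n₂ + n₁ * n₃ + n₂ * n₃ + n₁ * n₂ * n₃)
              + 3 * ((n₁ : ℝ) + n₂ + n₃) - 1) * lam
          - 3 * (n₁ : ℝ) * n₂ * n₃ - 2 * ((n₁ : ℝ) * n₂ + n₁ * n₃ + n₂ * n₃)
          - ((n₁ : ℝ) + n₂ + n₃)) := by
  have hcard : Fintype.card (Fin 1 ⊕ (Fin n₁ ⊕ (Fin n₂ ⊕ Fin n₃))) = n₁ + n₂ + n₃ + 1 := by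
    simp only [Fintype.card_sum, Fintype.card_fin]
    omega
  have hshift : lam • (1 : Matrix (Fin 1 ⊕ (Fin n₁ ⊕ (Fin n₂ ⊕ Fin n₃))) _ ℝ) -
      (joinCliques3Pattern.submatrix cliqueBlock cliqueBlock - 1) =
      scalar _ (lam + 1) - joinCliques3Pattern.submatrix cliqueBlock cliqueBlock := by
    rw [scalar_apply, ← smul_one_eq_diagonal, add_smul, one_smul]
    abel
  rw [distMatrix_joinCliques3, hshift, ← eval_charpoly,
    charpoly_submatrix_of_card_le _ _ (by rw [hcard, Fintype.card_fin]; omega),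
    card_cliqueBlock_fiber, eval_mul, eval_pow, eval_X,
    eval_charpoly_joinCliques3Pattern_mul_diagonal, hcard, Fintype.card_fin]
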